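/- Every polynomial f(x,p) in two variables can be uniquely written as f = Σᵢ fᵢ(p) ∗_λ xⁱ where each fᵢ is a polynomial in p alone and ∗_λ is the Moyal product; i.e., the map (fᵢ) ↦ Σᵢ fᵢ(p) ∗_λ xⁱ from finitely-supported sequences of polynomials in p to polynomials in (x,p) is a linear bijection. -/

import Mathlib

open MvPolynomial

noncomputable section

/-- Polynomial functions on ℝ² with coordinates x = X 0, p = X 1. -/
abbrev P1 : Type := MvPolynomial (Fin 2) ℝ
/-- Doubled ring with coordinates x, p, x̃, p̃ = X 0, X 1, X 2, X 3. -/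
abbrev Q1 : Type := MvPolynomial (Fin 4) ℝ

def emb1a : P1 →ₐ[ℝ] Q1 := rename (fun i : Fin 2 => (⟨i.val, by omega⟩ : Fin 4))
def emb1b : P1 →ₐ[ℝ] Q1 := rename (fun i : Fin 2 => (⟨i.val + 2, by omega⟩ : Fin 4))
def diag1 : Q1 →ₐ[ℝ] P1 := aeval (fun j : Fin 4 => X (⟨j.val % 2, by omega⟩ : Fin 2))

/-- partial derivative in the j-th variable, as a linear endomorphism -/
def pd (j : Fin 4) : Module.End ℝ Q1 := (pderiv j).toLinearMap

/-- The bidifferential operator ∂_x ∂_{p̃} − ∂_{x̃} ∂_p on the doubled ring. -/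
def D1 : Module.End ℝ Q1 := pd 0 * pd 3 - pd 2 * pd 1

/-- The Moyal star product f ∗_λ g = exp(λ(∂_x∂_{p̃} − ∂_{x̃}∂_p)) f(x,p) g(x̃,p̃)|_{x̃=x,p̃=p}.
Since f and g are polynomials, the exponential series truncates. -/
def moyal (lam : ℝ) (f g : P1) : P1 :=
  diag1 (∑ n ∈ Finset.range (f.totalDegree + g.totalDegree + 1),
    (lam ^ n / n.factorial : ℝ) • ((D1 ^ n) (emb1a f * emb1b g)))

/-- Interpret a one-variable polynomial as a polynomial in the momentum variable p = X 1. -/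
def ofP (q : Polynomial ℝ) : P1 := Polynomial.aeval (X 1 : P1) q

/-- The map (fᵢ)ᵢ ↦ Σᵢ fᵢ(p) ∗_λ xⁱ, from finitely supported sequences of polynomials
in p alone to polynomials in (x,p). -/
def moyalExpand (lam : ℝ) (c : ℕ →₀ Polynomial ℝ) : P1 :=
  c.sum fun i q => moyal lam (ofP q) ((X 0 : P1) ^ i)


lemma td_pderiv_le {σ : Type*} [DecidableEq σ] (i : σ) (f : MvPolynomial σ ℝ) :
    (pderiv i f).totalDegree ≤ f.totalDegree - 1 := by
  conv_lhs => rw [f.as_sum, map_sum]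
  refine (totalDegree_finset_sum _ _).trans (Finset.sup_le ?_)
  intro m hm
  rw [pderiv_monomial]
  by_cases h : m i = 0
  · simp [h]
  · refine (totalDegree_monomial_le _ _).trans ?_
    simp only [Function.id_def]
    have hle : Finsupp.single i 1 ≤ m := by
      rw [Finsupp.single_le_iff]; omega
    have hm2 : (m - Finsupp.single i 1) + Finsupp.single i 1 = m := tsub_add_cancel_of_le hle
    have hsum : ((m - Finsupp.single i 1).sum fun _ e => e) + 1 = m.sum fun _ e => e := by
      conv_rhs => rw [← hm2]
      rw [Finsupp.sum_add_index' (fun _ => rfl) (fun _ _ _ => rfl)]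
      simp
    have hms : (m.sum fun _ e => e) ≤ f.totalDegree := le_totalDegree hm
    omega

lemma pderiv_td_zero {σ : Type*} [DecidableEq σ] (i : σ) (f : MvPolynomial σ ℝ)
    (h : f.totalDegree = 0) : pderiv i f = 0 := by
  rw [f.as_sum, map_sum]
  refine Finset.sum_eq_zero fun m hm => ?_
  rw [pderiv_monomial]
  have := (totalDegree_eq_zero_iff σ f).mp h m hm i
  simp [this]

lemma D1_apply (F : Q1) : D1 F = pderiv 0 (pderiv 3 F) - pderiv 2 (pderiv 1 F) := rfl

lemma td_D1_le (F : Q1) : (D1 F).totalDegree ≤ F.totalDegree - 2 := by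
  rw [D1_apply, sub_eq_add_neg]
  refine (totalDegree_add _ _).trans (max_le ?_ ?_)
  · exact (td_pderiv_le _ _).trans (Nat.sub_le_sub_right (td_pderiv_le _ _) 1)
  · rw [totalDegree_neg]
    exact (td_pderiv_le _ _).trans (Nat.sub_le_sub_right (td_pderiv_le _ _) 1)

lemma D1_td_zero (F : Q1) (h : F.totalDegree ≤ 1) : D1 F = 0 := by
  rw [D1_apply]
  have h3 : (pderiv (3 : Fin 4) F).totalDegree = 0 := by
    have := td_pderiv_le (3 : Fin 4) F; omega
  have h1 : (pderiv (1 : Fin 4) F).totalDegree = 0 := by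
    have := td_pderiv_le (1 : Fin 4) F; omega
  rw [pderiv_td_zero _ _ h3, pderiv_td_zero _ _ h1, sub_zero]

lemma D1_pow_zero (n : ℕ) (F : Q1) (h : F.totalDegree < n) : (D1 ^ n) F = 0 := by
  induction n generalizing F with
  | zero => omega
  | succ n ih =>
    rw [pow_succ, Module.End.mul_apply]
    rcases Nat.eq_zero_or_pos n with hn | hn
    · subst hn; rw [pow_zero, Module.End.one_apply]; exact D1_td_zero F (by omega)
    · rcases eq_or_ne (D1 F) 0 with h0 | h0
      · rw [h0, map_zero]
      · exact ih _ (by have := td_D1_le F; omega)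

def pd' (j : Fin 2) : Module.End ℝ P1 := (pderiv j).toLinearMap
def T : Module.End ℝ P1 := pd' 0 * pd' 1

lemma T_apply (F : P1) : T F = pderiv 0 (pderiv 1 F) := rfl

lemma td_T_le (F : P1) : (T F).totalDegree ≤ F.totalDegree - 2 := by
  rw [T_apply]
  exact (td_pderiv_le _ _).trans (Nat.sub_le_sub_right (td_pderiv_le _ _) 1)

lemma T_td_zero (F : P1) (h : F.totalDegree ≤ 1) : T F = 0 := by
  rw [T_apply]
  have h1 : (pderiv (1 : Fin 2) F).totalDegree = 0 := by
    have := td_pderiv_le (1 : Fin 2) F; omega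
  rw [pderiv_td_zero _ _ h1]

lemma T_pow_zero (n : ℕ) (F : P1) (h : F.totalDegree < n) : (T ^ n) F = 0 := by
  induction n generalizing F with
  | zero => omega
  | succ n ih =>
    rw [pow_succ, Module.End.mul_apply]
    rcases Nat.eq_zero_or_pos n with hn | hn
    · subst hn; rw [pow_zero, Module.End.one_apply]; exact T_td_zero F (by omega)
    · rcases eq_or_ne (T F) 0 with h0 | h0
      · rw [h0, map_zero]
      · exact ih _ (by have := td_T_le F; omega)

lemma td_T_pow_le (n : ℕ) (F : P1) : ((T ^ n) F).totalDegree ≤ F.totalDegree := by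
  induction n generalizing F with
  | zero => simp
  | succ n ih =>
    rw [pow_succ, Module.End.mul_apply]
    exact (ih _).trans ((td_T_le F).trans (Nat.sub_le _ _))

/-- Truncated exponential of μ T. -/
def U (μ : ℝ) (f : P1) : P1 :=
  ∑ n ∈ Finset.range (f.totalDegree + 1), (μ ^ n / n.factorial : ℝ) • (T ^ n) f

lemma U_eq (μ : ℝ) (f : P1) (N : ℕ) (h : f.totalDegree < N) :
    U μ f = ∑ n ∈ Finset.range N, (μ ^ n / n.factorial : ℝ) • (T ^ n) f := by
  refine (Finset.sum_subset (Finset.range_subset_range.mpr h) fun n _ hn => ?_)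
  rw [T_pow_zero n f (by simp at hn ⊢; omega), smul_zero]

lemma U_add (μ : ℝ) (f g : P1) : U μ (f + g) = U μ f + U μ g := by
  set N := max f.totalDegree g.totalDegree + 1 with hN
  rw [U_eq μ f N (by omega), U_eq μ g N (by omega),
    U_eq μ (f + g) N (lt_of_le_of_lt (totalDegree_add f g) (by omega)),
    ← Finset.sum_add_distrib]
  exact Finset.sum_congr rfl fun n _ => by rw [map_add, smul_add]

lemma U_smul (μ r : ℝ) (f : P1) : U μ (r • f) = r • U μ f := by
  rw [U_eq μ (r • f) (f.totalDegree + 1) (lt_of_le_of_lt (totalDegree_smul_le r f) (by omega)),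
    U, Finset.smul_sum]
  exact Finset.sum_congr rfl fun n _ => by rw [map_smul, smul_comm]

lemma U_zero_apply (μ : ℝ) : U μ 0 = 0 := by simp [U]

lemma U_zero (f : P1) : U 0 f = f := by
  rw [U, Finset.sum_eq_single_of_mem 0 (by simp)]
  · simp
  · intro n _ hn
    rw [zero_pow hn, zero_div, zero_smul]

lemma exp_coeff (μ ν : ℝ) (k : ℕ) :
    ∑ p ∈ Finset.HasAntidiagonal.antidiagonal k, (μ ^ p.1 / p.1.factorial) * (ν ^ p.2 / p.2.factorial)
      = (μ + ν) ^ k / k.factorial := by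
  rw [Finset.Nat.sum_antidiagonal_eq_sum_range_succ_mk, add_pow, Finset.sum_div]
  refine Finset.sum_congr rfl fun j hj => ?_
  have hjk : j ≤ k := Nat.lt_succ_iff.mp (Finset.mem_range.mp hj)
  have h := Nat.choose_mul_factorial_mul_factorial hjk
  have h1 : (j.factorial : ℝ) ≠ 0 := Nat.cast_ne_zero.mpr (Nat.factorial_ne_zero j)
  have h2 : ((k - j).factorial : ℝ) ≠ 0 := Nat.cast_ne_zero.mpr (Nat.factorial_ne_zero _)
  have h3 : (k.factorial : ℝ) ≠ 0 := Nat.cast_ne_zero.mpr (Nat.factorial_ne_zero k)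
  have h' : ((k.choose j : ℝ)) * j.factorial * (k - j).factorial = k.factorial := by
    exact_mod_cast congrArg (Nat.cast : ℕ → ℝ) h
  field_simp
  rw [← h']
  ring

lemma U_comp (μ ν : ℝ) (f : P1) : U μ (U ν f) = U (μ + ν) f := by
  set N := f.totalDegree + 1 with hN
  have hf : f.totalDegree < N := by omega
  have hTf : ∀ n, N ≤ n → (T ^ n) f = 0 := fun n hn => T_pow_zero n f (by omega)
  have h1 : U ν f = ∑ n ∈ Finset.range N, (ν ^ n / n.factorial : ℝ) • (T ^ n) f := U_eq _ _ _ hf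
  have hdeg : (U ν f).totalDegree < 2 * N := by
    rw [h1]
    have hb : ∀ n ∈ Finset.range N, ((ν ^ n / n.factorial : ℝ) • (T ^ n) f).totalDegree ≤ f.totalDegree :=
      fun n _ => (totalDegree_smul_le _ _).trans (td_T_pow_le n f)
    have h2 := (totalDegree_finset_sum (Finset.range N) _).trans (Finset.sup_le hb)
    omega
  rw [U_eq μ _ (2 * N) hdeg, h1, U_eq (μ + ν) f (4 * N) (by omega)]
  have step1 : ∀ m, (T ^ m) (∑ n ∈ Finset.range N, (ν ^ n / n.factorial : ℝ) • (T ^ n) f)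
      = ∑ n ∈ Finset.range N, (ν ^ n / n.factorial : ℝ) • (T ^ (m + n)) f := by
    intro m
    rw [map_sum]
    refine Finset.sum_congr rfl fun n _ => ?_
    rw [map_smul, pow_add, Module.End.mul_apply]
  calc
    ∑ m ∈ Finset.range (2 * N), (μ ^ m / m.factorial : ℝ) •
        (T ^ m) (∑ n ∈ Finset.range N, (ν ^ n / n.factorial : ℝ) • (T ^ n) f)
      = ∑ m ∈ Finset.range (2 * N), ∑ n ∈ Finset.range N,
          ((μ ^ m / m.factorial) * (ν ^ n / n.factorial) : ℝ) • (T ^ (m + n)) f := by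
        refine Finset.sum_congr rfl fun m _ => ?_
        rw [step1, Finset.smul_sum]
        exact Finset.sum_congr rfl fun n _ => by rw [smul_smul]
    _ = ∑ m ∈ Finset.range (2 * N), ∑ n ∈ Finset.range (2 * N),
          ((μ ^ m / m.factorial) * (ν ^ n / n.factorial) : ℝ) • (T ^ (m + n)) f := by
        refine Finset.sum_congr rfl fun m _ => ?_
        refine Finset.sum_subset (Finset.range_subset_range.mpr (by omega)) fun n _ hn => ?_
        simp only [Finset.mem_range, not_lt] at hn
        rw [T_pow_zero (m + n) f (by omega), smul_zero]
    _ = ∑ p ∈ Finset.range (2 * N) ×ˢ Finset.range (2 * N),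
          ((μ ^ p.1 / p.1.factorial) * (ν ^ p.2 / p.2.factorial) : ℝ) • (T ^ (p.1 + p.2)) f := by
        rw [Finset.sum_product]
    _ = ∑ p ∈ (Finset.range (4 * N)).biUnion Finset.HasAntidiagonal.antidiagonal,
          ((μ ^ p.1 / p.1.factorial) * (ν ^ p.2 / p.2.factorial) : ℝ) • (T ^ (p.1 + p.2)) f := by
        refine Finset.sum_subset ?_ fun p hp hp2 => ?_
        · intro p hp
          simp only [Finset.mem_product, Finset.mem_range] at hp
          exact Finset.mem_biUnion.mpr ⟨p.1 + p.2, Finset.mem_range.mpr (by omega),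
            Finset.HasAntidiagonal.mem_antidiagonal.mpr rfl⟩
        · have : N ≤ p.1 + p.2 := by
            simp only [Finset.mem_product, Finset.mem_range, not_and_or, not_lt] at hp2
            omega
          rw [T_pow_zero (p.1 + p.2) f (by omega), smul_zero]
    _ = ∑ k ∈ Finset.range (4 * N), ∑ p ∈ Finset.HasAntidiagonal.antidiagonal k,
          ((μ ^ p.1 / p.1.factorial) * (ν ^ p.2 / p.2.factorial) : ℝ) • (T ^ (p.1 + p.2)) f := by
        refine Finset.sum_biUnion ?_
        intro a _ b _ hab
        simp only [Finset.disjoint_left]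
        intro p hpa hpb
        exact hab ((Finset.HasAntidiagonal.mem_antidiagonal.mp hpa).symm.trans (Finset.HasAntidiagonal.mem_antidiagonal.mp hpb))
    _ = ∑ k ∈ Finset.range (4 * N), ((μ + ν) ^ k / k.factorial : ℝ) • (T ^ k) f := by
        refine Finset.sum_congr rfl fun k _ => ?_
        rw [← exp_coeff, Finset.sum_smul]
        refine Finset.sum_congr rfl fun p hp => ?_
        rw [Finset.HasAntidiagonal.mem_antidiagonal.mp hp]

lemma moyal_eq (lam : ℝ) (f g : P1) (N : ℕ) (h : f.totalDegree + g.totalDegree < N) :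
    moyal lam f g = diag1 (∑ n ∈ Finset.range N,
      (lam ^ n / n.factorial : ℝ) • ((D1 ^ n) (emb1a f * emb1b g))) := by
  unfold moyal
  congr 1
  refine Finset.sum_subset (Finset.range_subset_range.mpr (by omega)) fun n _ hn => ?_
  simp only [Finset.mem_range, not_lt] at hn
  have hd : (emb1a f * emb1b g).totalDegree < n := by
    have h1 := totalDegree_mul (emb1a f) (emb1b g)
    have h2 := totalDegree_rename_le (fun i : Fin 2 => (⟨i.val, by omega⟩ : Fin 4)) f
    have h3 := totalDegree_rename_le (fun i : Fin 2 => (⟨i.val + 2, by omega⟩ : Fin 4)) g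
    unfold emb1a emb1b at h1 ⊢
    omega
  rw [D1_pow_zero n _ hd, smul_zero]

lemma moyal_zero_left (lam : ℝ) (g : P1) : moyal lam 0 g = 0 := by
  unfold moyal
  simp

lemma moyal_add_left (lam : ℝ) (f f' g : P1) :
    moyal lam (f + f') g = moyal lam f g + moyal lam f' g := by
  set N := max f.totalDegree f'.totalDegree + g.totalDegree + 1 with hN
  rw [moyal_eq lam f g N (by omega), moyal_eq lam f' g N (by omega),
    moyal_eq lam (f + f') g N (by have := totalDegree_add f f'; omega), ← map_add,
    ← Finset.sum_add_distrib]
  congr 1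
  refine Finset.sum_congr rfl fun n _ => ?_
  rw [map_add, add_mul, map_add, smul_add]

lemma moyal_smul_left (lam r : ℝ) (f g : P1) :
    moyal lam (r • f) g = r • moyal lam f g := by
  set N := f.totalDegree + g.totalDegree + 1 with hN
  rw [moyal_eq lam (r • f) g N (by have := totalDegree_smul_le r f; omega),
    moyal_eq lam f g N (by omega), ← map_smul, Finset.smul_sum]
  congr 1
  refine Finset.sum_congr rfl fun n _ => ?_
  rw [map_smul, smul_mul_assoc, map_smul, smul_comm]

lemma pderiv_aeval_self {σ : Type*} [DecidableEq σ] (k : σ) (q : Polynomial ℝ) :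
    pderiv k (Polynomial.aeval (X k : MvPolynomial σ ℝ) q)
      = Polynomial.aeval (X k : MvPolynomial σ ℝ) q.derivative := by
  rw [Derivation.map_aeval, pderiv_X_self, smul_eq_mul, mul_one]

lemma pderiv_aeval_ne {σ : Type*} [DecidableEq σ] {j k : σ} (h : k ≠ j) (q : Polynomial ℝ) :
    pderiv j (Polynomial.aeval (X k : MvPolynomial σ ℝ) q) = 0 := by
  rw [Derivation.map_aeval, pderiv_X_of_ne h, smul_zero]

lemma Q_step (q g : Polynomial ℝ) :
    D1 (Polynomial.aeval (X 1 : Q1) q * Polynomial.aeval (X 2 : Q1) g)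
    = -(Polynomial.aeval (X 1 : Q1) q.derivative * Polynomial.aeval (X 2 : Q1) g.derivative) := by
  have e1 : pderiv (3:Fin 4) (Polynomial.aeval (X 1 : Q1) q) = 0 := pderiv_aeval_ne (by decide) q
  have e2 : pderiv (3:Fin 4) (Polynomial.aeval (X 2 : Q1) g) = 0 := pderiv_aeval_ne (by decide) g
  have e3 : pderiv (1:Fin 4) (Polynomial.aeval (X 2 : Q1) g) = 0 := pderiv_aeval_ne (by decide) g
  have e4 : pderiv (2:Fin 4) (Polynomial.aeval (X 1 : Q1) q.derivative) = 0 :=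
    pderiv_aeval_ne (by decide) _
  rw [D1_apply, pderiv_mul, e1, e2, zero_mul, mul_zero, add_zero, map_zero,
    pderiv_mul, e3, mul_zero, add_zero, pderiv_aeval_self,
    pderiv_mul, e4, zero_mul, zero_add, pderiv_aeval_self, zero_sub]

lemma Q_iter (n : ℕ) (q g : Polynomial ℝ) :
    (D1 ^ n) (Polynomial.aeval (X 1 : Q1) q * Polynomial.aeval (X 2 : Q1) g)
    = ((-1 : ℝ) ^ n) • (Polynomial.aeval (X 1 : Q1) (Polynomial.derivative^[n] q) *
        Polynomial.aeval (X 2 : Q1) (Polynomial.derivative^[n] g)) := by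
  induction n generalizing q g with
  | zero => simp
  | succ n ih =>
    rw [pow_succ, Module.End.mul_apply, Q_step, map_neg, ih,
      Function.iterate_succ_apply, Function.iterate_succ_apply, pow_succ, mul_comm ((-1:ℝ)^n),
      mul_smul, neg_one_smul, ← smul_neg]

lemma P_step (q g : Polynomial ℝ) :
    T (ofP q * Polynomial.aeval (X 0 : P1) g)
    = ofP q.derivative * Polynomial.aeval (X 0 : P1) g.derivative := by
  have e1 : pderiv (1:Fin 2) (Polynomial.aeval (X 0 : P1) g) = 0 := pderiv_aeval_ne (by decide) g
  have e2 : pderiv (0:Fin 2) (Polynomial.aeval (X 1 : P1) q.derivative) = 0 :=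
    pderiv_aeval_ne (by decide) _
  unfold ofP
  rw [T_apply, pderiv_mul, e1, mul_zero, add_zero, pderiv_aeval_self,
    pderiv_mul, e2, zero_mul, zero_add, pderiv_aeval_self]

lemma P_iter (n : ℕ) (q g : Polynomial ℝ) :
    (T ^ n) (ofP q * Polynomial.aeval (X 0 : P1) g)
    = ofP (Polynomial.derivative^[n] q) * Polynomial.aeval (X 0 : P1) (Polynomial.derivative^[n] g) := by
  induction n generalizing q g with
  | zero => simp
  | succ n ih =>
    rw [pow_succ, Module.End.mul_apply, P_step, ih,
      Function.iterate_succ_apply, Function.iterate_succ_apply]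

lemma diag1_X1 : diag1 (X (1 : Fin 4)) = (X (1 : Fin 2) : P1) := by
  unfold diag1
  rw [aeval_X]
  exact congrArg X (by decide)

lemma diag1_X2 : diag1 (X (2 : Fin 4)) = (X (0 : Fin 2) : P1) := by
  unfold diag1
  rw [aeval_X]
  exact congrArg X (by decide)

lemma diag1_a1 (q : Polynomial ℝ) : diag1 (Polynomial.aeval (X 1 : Q1) q) = ofP q := by
  rw [← Polynomial.aeval_algHom_apply, diag1_X1, ofP]

lemma diag1_a2 (g : Polynomial ℝ) :
    diag1 (Polynomial.aeval (X 2 : Q1) g) = Polynomial.aeval (X 0 : P1) g := by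
  rw [← Polynomial.aeval_algHom_apply, diag1_X2]

lemma emb1a_ofP (q : Polynomial ℝ) : emb1a (ofP q) = Polynomial.aeval (X 1 : Q1) q := by
  rw [ofP, ← Polynomial.aeval_algHom_apply]
  congr 1
  unfold emb1a
  rw [rename_X]
  congr 1

lemma emb1b_Xpow (i : ℕ) : emb1b ((X 0 : P1) ^ i) = (X 2 : Q1) ^ i := by
  rw [map_pow]
  congr 1
  unfold emb1b
  rw [rename_X]
  congr 1

lemma moyal_key (lam : ℝ) (q : Polynomial ℝ) (i : ℕ) :
    moyal lam (ofP q) ((X 0 : P1) ^ i) = U (-lam) (ofP q * (X 0 : P1) ^ i) := by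
  set N := (ofP q).totalDegree + ((X 0 : P1) ^ i).totalDegree + 1 with hN
  have hX : ((X 0 : P1) ^ i) = Polynomial.aeval (X 0 : P1) ((Polynomial.X : Polynomial ℝ) ^ i) := by
    rw [map_pow, Polynomial.aeval_X]
  have hemb : emb1a (ofP q) * emb1b ((X 0 : P1) ^ i)
      = Polynomial.aeval (X 1 : Q1) q * Polynomial.aeval (X 2 : Q1) ((Polynomial.X : Polynomial ℝ) ^ i) := by
    rw [emb1a_ofP, emb1b_Xpow, map_pow, Polynomial.aeval_X]
  have htd : (ofP q * (X 0 : P1) ^ i).totalDegree < N := by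
    have := totalDegree_mul (ofP q) ((X 0 : P1) ^ i)
    omega
  rw [moyal_eq lam _ _ N (by omega), map_sum, U_eq (-lam) _ N htd]
  refine Finset.sum_congr rfl fun n _ => ?_
  conv_rhs => rw [hX]
  rw [map_smul, hemb, Q_iter, P_iter, map_smul, map_mul, diag1_a1, diag1_a2, smul_smul]
  congr 1
  rw [neg_pow]
  ring

def Psi (c : ℕ →₀ Polynomial ℝ) : P1 := c.sum fun i q => ofP q * (X 0 : P1) ^ i

lemma ofP_zero : ofP 0 = 0 := map_zero _
lemma ofP_add (q q' : Polynomial ℝ) : ofP (q + q') = ofP q + ofP q' := map_add _ _ _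
lemma ofP_smul (r : ℝ) (q : Polynomial ℝ) : ofP (r • q) = r • ofP q := map_smul _ _ _

lemma Psi_add (c d : ℕ →₀ Polynomial ℝ) : Psi (c + d) = Psi c + Psi d := by
  unfold Psi
  exact Finsupp.sum_add_index' (fun i => by rw [ofP_zero, zero_mul])
    (fun i q q' => by rw [ofP_add, add_mul])

lemma Psi_single (i : ℕ) (q : Polynomial ℝ) :
    Psi (Finsupp.single i q) = ofP q * (X 0 : P1) ^ i :=
  Finsupp.sum_single_index (by rw [ofP_zero, zero_mul])

def Ulin (μ : ℝ) : P1 →ₗ[ℝ] P1 where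
  toFun := U μ
  map_add' := U_add μ
  map_smul' := fun r f => U_smul μ r f

lemma expand_eq (lam : ℝ) (c : ℕ →₀ Polynomial ℝ) :
    moyalExpand lam c = U (-lam) (Psi c) := by
  calc moyalExpand lam c = ∑ i ∈ c.support, moyal lam (ofP (c i)) ((X 0 : P1) ^ i) := rfl
    _ = ∑ i ∈ c.support, U (-lam) (ofP (c i) * (X 0 : P1) ^ i) :=
        Finset.sum_congr rfl fun i _ => moyal_key lam _ i
    _ = Ulin (-lam) (∑ i ∈ c.support, (ofP (c i) * (X 0 : P1) ^ i)) := by rw [map_sum]; rfl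
    _ = U (-lam) (Psi c) := rfl

lemma U_bij (μ : ℝ) : Function.Bijective (U μ) := by
  refine Function.bijective_iff_has_inverse.mpr ⟨U (-μ), fun f => ?_, fun f => ?_⟩
  · rw [U_comp, neg_add_cancel, U_zero]
  · rw [U_comp, add_neg_cancel, U_zero]

def toU : MvPolynomial (Fin 1) ℝ →ₐ[ℝ] Polynomial ℝ := aeval fun _ => Polynomial.X
def mvP : Polynomial ℝ →ₐ[ℝ] MvPolynomial (Fin 1) ℝ := Polynomial.aeval (X 0)

lemma toU_mvP (q : Polynomial ℝ) : toU (mvP q) = q := by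
  rw [mvP, ← Polynomial.aeval_algHom_apply, show toU (X 0) = Polynomial.X from aeval_X _ _]
  exact Polynomial.aeval_X_left_apply q

def invP (f : P1) : ℕ →₀ Polynomial ℝ :=
  ((finSuccEquiv ℝ 1 f).toFinsupp.coeff).mapRange toU (map_zero _)

lemma F_ofP (q : Polynomial ℝ) : finSuccEquiv ℝ 1 (ofP q) = Polynomial.C (mvP q) := by
  rw [ofP, ← Polynomial.aeval_algHom_apply]
  rw [show (finSuccEquiv ℝ 1) (X 1) = Polynomial.C (X 0 : MvPolynomial (Fin 1) ℝ) by
    rw [show (X (1 : Fin 2) : P1) = X (Fin.succ 0) from congrArg X (by decide),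
      finSuccEquiv_X_succ]]
  rw [show (Polynomial.C : MvPolynomial (Fin 1) ℝ →+* Polynomial (MvPolynomial (Fin 1) ℝ)) (X 0)
      = Polynomial.CAlgHom (R := ℝ) (X 0) from rfl]
  rw [Polynomial.aeval_algHom_apply, mvP]
  rfl

lemma invP_single (i : ℕ) (q : Polynomial ℝ) :
    invP (ofP q * (X 0 : P1) ^ i) = Finsupp.single i q := by
  unfold invP
  rw [map_mul, map_pow, finSuccEquiv_X_zero, F_ofP, Polynomial.C_mul_X_pow_eq_monomial,
    Polynomial.toFinsupp_monomial, AddMonoidAlgebra.coeff_single, Finsupp.mapRange_single, toU_mvP]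

lemma invP_add (f g : P1) : invP (f + g) = invP f + invP g := by
  unfold invP
  rw [map_add, Polynomial.toFinsupp_add, AddMonoidAlgebra.coeff_add, Finsupp.mapRange_add (map_add toU)]

lemma invP_Psi (c : ℕ →₀ Polynomial ℝ) : invP (Psi c) = c := by
  induction c using Finsupp.induction with
  | zero => simp [Psi, invP]
  | single_add i q c hic hq ih =>
    rw [Psi_add, invP_add, Psi_single, invP_single, ih]

lemma Psi_surj : Function.Surjective Psi := by
  intro f
  induction f using MvPolynomial.induction_on with
  | C a =>
    refine ⟨Finsupp.single 0 (Polynomial.C a), ?_⟩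
    rw [Psi_single, pow_zero, mul_one, ofP, Polynomial.aeval_C, algebraMap_eq]
  | add f g hf hg =>
    obtain ⟨c, rfl⟩ := hf
    obtain ⟨d, rfl⟩ := hg
    exact ⟨c + d, Psi_add c d⟩
  | mul_X f j hf =>
    obtain ⟨c, rfl⟩ := hf
    fin_cases j
    · refine ⟨c.mapDomain (· + 1), ?_⟩
      unfold Psi
      rw [Finsupp.sum_mapDomain_index (fun i => by rw [ofP_zero, zero_mul])
        (fun i q q' => by rw [ofP_add, add_mul]), Finsupp.sum_mul]
      refine Finset.sum_congr rfl fun i _ => ?_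
      show ofP (c i) * (X 0 : P1) ^ (i + 1) = ofP (c i) * (X 0 : P1) ^ i * X 0
      rw [pow_succ, mul_assoc]
    · refine ⟨c.mapRange (· * Polynomial.X) (zero_mul _), ?_⟩
      unfold Psi
      rw [Finsupp.sum_mapRange_index (fun i => by rw [ofP_zero, zero_mul]), Finsupp.sum_mul]
      refine Finset.sum_congr rfl fun i _ => ?_
      show ofP (c i * Polynomial.X) * (X 0 : P1) ^ i = ofP (c i) * (X 0 : P1) ^ i * X 1
      have h : ofP (c i * Polynomial.X) = ofP (c i) * X 1 := by
        unfold ofP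
        rw [map_mul, Polynomial.aeval_X]
      rw [h]
      ring

lemma Psi_bij : Function.Bijective Psi :=
  ⟨Function.LeftInverse.injective invP_Psi, Psi_surj⟩

/-- Every polynomial f(x,p) can be uniquely written as f = Σᵢ fᵢ(p) ∗_λ xⁱ:
the expansion map is an additive (linear) bijection. -/
theorem stmt_5 (lam : ℝ) :
    Function.Bijective (moyalExpand lam) ∧
      (∀ c d : ℕ →₀ Polynomial ℝ, moyalExpand lam (c + d) = moyalExpand lam c + moyalExpand lam d) ∧
      (∀ (r : ℝ) (c : ℕ →₀ Polynomial ℝ), moyalExpand lam (r • c) = r • moyalExpand lam c) := by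
  refine ⟨?_, ?_, ?_⟩
  · have : moyalExpand lam = (U (-lam)) ∘ Psi := funext fun c => expand_eq lam c
    rw [this]
    exact (U_bij (-lam)).comp Psi_bij
  · intro c d
    unfold moyalExpand
    exact Finsupp.sum_add_index' (fun i => by rw [ofP_zero, moyal_zero_left])
      (fun i q q' => by rw [ofP_add, moyal_add_left])
  · intro r c
    unfold moyalExpand
    rw [Finsupp.sum_smul_index' (fun i => by rw [ofP_zero, moyal_zero_left]), Finsupp.smul_sum]
    exact Finsupp.sum_congr fun i _ => by rw [ofP_smul, moyal_smul_left]
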